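/- In the first Weyl algebra A₁, let D_t = span{p^i q^s : s - i = t} for t ∈ ℤ, D_{≥0} = ⊕_{t≥0} D_t, and D_{>0} = ⊕_{t>0} D_t. Then [D_{≥0}, D_{≥0}] = D_{>0}, i.e., the K-span of all commutators [z,w] with z, w ∈ D_{≥0} equals D_{>0}. -/
import Mathlib


/-- The defining relation of the first Weyl algebra: `p q = q p + 1`,
where `p` and `q` are the images of the generators `0` and `1`. -/
inductive WeylRel (K : Type) [Field K] :
    FreeAlgebra K (Fin 2) → FreeAlgebra K (Fin 2) → Prop
  | rel : WeylRel K (FreeAlgebra.ι K 0 * FreeAlgebra.ι K 1)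
      (FreeAlgebra.ι K 1 * FreeAlgebra.ι K 0 + 1)

/-- The first Weyl algebra `A₁` over `K`. -/
abbrev Weyl (K : Type) [Field K] := RingQuot (WeylRel K)

/-- The generator `p` of `A₁`. -/
noncomputable def Wp (K : Type) [Field K] : Weyl K :=
  RingQuot.mkAlgHom K (WeylRel K) (FreeAlgebra.ι K 0)

/-- The generator `q` of `A₁`. -/
noncomputable def Wq (K : Type) [Field K] : Weyl K :=
  RingQuot.mkAlgHom K (WeylRel K) (FreeAlgebra.ι K 1)

/-- The homogeneous component `D_t = span{p^i q^s : s - i = t}` of `A₁`. -/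
noncomputable def WeylD (K : Type) [Field K] (t : ℤ) : Submodule K (Weyl K) :=
  Submodule.span K {x | ∃ i s : ℕ, (s : ℤ) - (i : ℤ) = t ∧ x = Wp K ^ i * Wq K ^ s}

/-- `D_{≥0} = ⊕_{t≥0} D_t`, the span of the monomials `p^i q^s` with `i ≤ s`. -/
noncomputable def WeylDge0 (K : Type) [Field K] : Submodule K (Weyl K) :=
  Submodule.span K {x | ∃ i s : ℕ, i ≤ s ∧ x = Wp K ^ i * Wq K ^ s}

/-- `D_{>0} = ⊕_{t>0} D_t`, the span of the monomials `p^i q^s` with `i < s`. -/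
noncomputable def WeylDgt0 (K : Type) [Field K] : Submodule K (Weyl K) :=
  Submodule.span K {x | ∃ i s : ℕ, i < s ∧ x = Wp K ^ i * Wq K ^ s}

variable (K : Type) [Field K]

lemma weyl_pq : Wp K * Wq K = Wq K * Wp K + 1 := by
  have h := RingQuot.mkAlgHom_rel K (WeylRel.rel (K := K))
  simpa [Wp, Wq, map_mul, map_add, map_one] using h

lemma weyl_qp : Wq K * Wp K = Wp K * Wq K - 1 := by
  rw [weyl_pq, add_sub_cancel_right]

/-- `q^s p = p q^s - s q^(s-1)` in the form avoiding nat subtraction. -/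
lemma weyl_qpow_p (s : ℕ) :
    Wq K ^ (s + 1) * Wp K = Wp K * Wq K ^ (s + 1) - (s + 1 : ℕ) • Wq K ^ s := by
  induction s with
  | zero => simp [weyl_qp]
  | succ n ih =>
    have h0 : Wq K ^ (n + 2) * Wp K = Wq K * (Wq K ^ (n + 1) * Wp K) := by
      rw [pow_succ', mul_assoc]
    rw [h0, ih, mul_sub, mul_smul_comm, ← mul_assoc, weyl_qp, sub_mul, one_mul,
      mul_assoc]
    simp only [← pow_succ']
    module

/-- ad(pq) on q: `(pq) q = q (pq) + q`. -/
lemma weyl_h_q : (Wp K * Wq K) * Wq K = Wq K * (Wp K * Wq K) + Wq K := by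
  calc (Wp K * Wq K) * Wq K = (Wq K * Wp K + 1) * Wq K := by rw [weyl_pq]
  _ = Wq K * (Wp K * Wq K) + Wq K := by rw [add_mul, one_mul, mul_assoc]

lemma weyl_h_p : (Wp K * Wq K) * Wp K = Wp K * (Wp K * Wq K) - Wp K := by
  calc (Wp K * Wq K) * Wp K = Wp K * (Wq K * Wp K) := by rw [mul_assoc]
  _ = Wp K * (Wp K * Wq K - 1) := by rw [weyl_qp]
  _ = Wp K * (Wp K * Wq K) - Wp K := by rw [mul_sub, mul_one]

lemma weyl_h_qpow (s : ℕ) :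
    (Wp K * Wq K) * Wq K ^ s = Wq K ^ s * (Wp K * Wq K) + s • Wq K ^ s := by
  induction s with
  | zero => simp
  | succ n ih =>
    have h0 : (Wp K * Wq K) * Wq K ^ (n + 1) = ((Wp K * Wq K) * Wq K ^ n) * Wq K := by
      rw [pow_succ, ← mul_assoc]
    have h1 : (Wq K ^ n * (Wp K * Wq K)) * Wq K = Wq K ^ n * ((Wp K * Wq K) * Wq K) :=
      mul_assoc _ _ _
    rw [h0, ih, add_mul, smul_mul_assoc, h1, weyl_h_q, mul_add, ← mul_assoc]
    simp only [← pow_succ]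
    module

lemma weyl_h_ppow (i : ℕ) :
    (Wp K * Wq K) * Wp K ^ i = Wp K ^ i * (Wp K * Wq K) - i • Wp K ^ i := by
  induction i with
  | zero => simp
  | succ n ih =>
    have h0 : (Wp K * Wq K) * Wp K ^ (n + 1) = ((Wp K * Wq K) * Wp K ^ n) * Wp K := by
      rw [pow_succ, ← mul_assoc]
    have h1 : (Wp K ^ n * (Wp K * Wq K)) * Wp K = Wp K ^ n * ((Wp K * Wq K) * Wp K) :=
      mul_assoc _ _ _
    rw [h0, ih, sub_mul, smul_mul_assoc, h1, weyl_h_p, mul_sub, ← mul_assoc]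
    simp only [← pow_succ]
    module

/-- The adjoint action of `h = pq` on the monomial `p^i q^s`. -/
lemma weyl_h_monomial (i s : ℕ) :
    (Wp K * Wq K) * (Wp K ^ i * Wq K ^ s) + i • (Wp K ^ i * Wq K ^ s) =
      (Wp K ^ i * Wq K ^ s) * (Wp K * Wq K) + s • (Wp K ^ i * Wq K ^ s) := by
  have h1 : (Wp K * Wq K) * (Wp K ^ i * Wq K ^ s)
      = ((Wp K * Wq K) * Wp K ^ i) * Wq K ^ s := (mul_assoc _ _ _).symm
  have h2 : (Wp K ^ i * (Wp K * Wq K)) * Wq K ^ s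
      = Wp K ^ i * ((Wp K * Wq K) * Wq K ^ s) := mul_assoc _ _ _
  rw [h1, weyl_h_ppow, sub_mul, smul_mul_assoc, h2, weyl_h_qpow, mul_add,
    mul_smul_comm, ← mul_assoc]
  module

open Polynomial in
/-- `h^n q = q (h+1)^n` where `h = pq`. -/
lemma weyl_hpow_q (n : ℕ) :
    (Wp K * Wq K) ^ n * Wq K = Wq K * (Wp K * Wq K + 1) ^ n := by
  induction n with
  | zero => simp
  | succ m ih =>
    have h0 : (Wp K * Wq K) ^ (m + 1) * Wq K
        = (Wp K * Wq K) * ((Wp K * Wq K) ^ m * Wq K) := by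
      rw [pow_succ', mul_assoc]
    rw [h0, ih, ← mul_assoc, weyl_h_q, add_mul, mul_assoc]
    rw [pow_succ', add_mul, one_mul, mul_add]

open Polynomial in
lemma weyl_aeval_q (F : Polynomial K) :
    (aeval (Wp K * Wq K) F) * Wq K = Wq K * aeval (Wp K * Wq K + 1) F := by
  induction F using Polynomial.induction_on' with
  | add f g hf hg => rw [map_add, add_mul, hf, hg, map_add, mul_add]
  | monomial n a =>
    rw [aeval_monomial, aeval_monomial, mul_assoc, weyl_hpow_q, ← mul_assoc,
      Algebra.commutes, mul_assoc]

open Polynomial in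
lemma weyl_diag_poly (a : ℕ) :
    ∃ F : Polynomial K, Wp K ^ a * Wq K ^ a = aeval (Wp K * Wq K) F := by
  induction a with
  | zero => exact ⟨1, by simp⟩
  | succ n ih =>
    obtain ⟨F, hF⟩ := ih
    refine ⟨X * F.comp (X + 1), ?_⟩
    have h0 : Wp K ^ (n + 1) * Wq K ^ (n + 1)
        = Wp K * ((Wp K ^ n * Wq K ^ n) * Wq K) := by
      rw [pow_succ', mul_assoc, mul_assoc, ← pow_succ]
    rw [h0, hF, weyl_aeval_q, map_mul, aeval_X, aeval_comp, map_add, aeval_X, map_one,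
      ← mul_assoc]

lemma weyl_diag_comm (a c : ℕ) :
    (Wp K ^ a * Wq K ^ a) * (Wp K ^ c * Wq K ^ c)
      = (Wp K ^ c * Wq K ^ c) * (Wp K ^ a * Wq K ^ a) := by
  obtain ⟨F, hF⟩ := weyl_diag_poly K a
  obtain ⟨G, hG⟩ := weyl_diag_poly K c
  rw [hF, hG, ← map_mul, ← map_mul, mul_comm]

lemma weyl_mono_mem_D (i s : ℕ) (t : ℤ) (h : (s : ℤ) - (i : ℤ) = t) :
    Wp K ^ i * Wq K ^ s ∈ WeylD K t :=
  Submodule.subset_span ⟨i, s, h, rfl⟩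

lemma weyl_mem_D_mulq {t : ℤ} {x : Weyl K} (hx : x ∈ WeylD K t) :
    x * Wq K ∈ WeylD K (t + 1) := by
  induction hx using Submodule.span_induction with
  | mem y hy =>
    obtain ⟨i, s, hst, rfl⟩ := hy
    rw [mul_assoc, ← pow_succ]
    exact weyl_mono_mem_D K i (s + 1) _ (by push_cast; omega)
  | zero => simpa using (WeylD K (t + 1)).zero_mem
  | add y z _ _ hy hz => rw [add_mul]; exact (WeylD K (t + 1)).add_mem hy hz
  | smul a y _ hy => rw [smul_mul_assoc]; exact (WeylD K (t + 1)).smul_mem a hy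

lemma weyl_mem_D_pmul {t : ℤ} {x : Weyl K} (hx : x ∈ WeylD K t) :
    Wp K * x ∈ WeylD K (t - 1) := by
  induction hx using Submodule.span_induction with
  | mem y hy =>
    obtain ⟨i, s, hst, rfl⟩ := hy
    rw [← mul_assoc, ← pow_succ']
    exact weyl_mono_mem_D K (i + 1) s _ (by push_cast; omega)
  | zero => simpa using (WeylD K (t - 1)).zero_mem
  | add y z _ _ hy hz => rw [mul_add]; exact (WeylD K (t - 1)).add_mem hy hz
  | smul a y _ hy => rw [mul_smul_comm]; exact (WeylD K (t - 1)).smul_mem a hy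

lemma weyl_mem_D_mulp {t : ℤ} {x : Weyl K} (hx : x ∈ WeylD K t) :
    x * Wp K ∈ WeylD K (t - 1) := by
  induction hx using Submodule.span_induction with
  | mem y hy =>
    obtain ⟨i, s, hst, rfl⟩ := hy
    match s with
    | 0 =>
      simp only [pow_zero, mul_one]
      rw [← pow_succ]
      have : Wp K ^ (i + 1) = Wp K ^ (i + 1) * Wq K ^ 0 := by simp
      rw [this]
      exact weyl_mono_mem_D K (i + 1) 0 _ (by push_cast; omega)
    | n + 1 =>
      rw [mul_assoc, weyl_qpow_p, mul_sub, mul_smul_comm, ← mul_assoc, ← pow_succ]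
      refine (WeylD K (t - 1)).sub_mem
        (weyl_mono_mem_D K (i + 1) (n + 1) _ (by push_cast; omega)) ?_
      rw [← Nat.cast_smul_eq_nsmul K]
      exact (WeylD K (t - 1)).smul_mem _
        (weyl_mono_mem_D K i n _ (by push_cast; omega))
  | zero => simpa using (WeylD K (t - 1)).zero_mem
  | add y z _ _ hy hz => rw [add_mul]; exact (WeylD K (t - 1)).add_mem hy hz
  | smul a y _ hy => rw [smul_mul_assoc]; exact (WeylD K (t - 1)).smul_mem a hy

lemma weyl_qpow_ppow_mem (b c : ℕ) :
    Wq K ^ b * Wp K ^ c ∈ WeylD K ((b : ℤ) - (c : ℤ)) := by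
  induction c with
  | zero =>
    simp only [pow_zero, mul_one]
    have : Wq K ^ b = Wp K ^ 0 * Wq K ^ b := by simp
    rw [this]
    exact weyl_mono_mem_D K 0 b _ (by push_cast; omega)
  | succ n ih =>
    have h0 : Wq K ^ b * Wp K ^ (n + 1) = (Wq K ^ b * Wp K ^ n) * Wp K := by
      rw [pow_succ, ← mul_assoc]
    rw [h0]
    have := weyl_mem_D_mulp K ih
    convert this using 2
    push_cast; ring

lemma weyl_mem_D_mul_qpow {t : ℤ} {x : Weyl K} (hx : x ∈ WeylD K t) (d : ℕ) :
    x * Wq K ^ d ∈ WeylD K (t + d) := by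
  induction d with
  | zero => simpa using hx
  | succ n ih =>
    have h : x * Wq K ^ (n + 1) = (x * Wq K ^ n) * Wq K := by rw [pow_succ, ← mul_assoc]
    rw [h]
    have := weyl_mem_D_mulq K ih
    convert this using 2; push_cast; ring

lemma weyl_mem_D_ppow_mul {t : ℤ} {x : Weyl K} (hx : x ∈ WeylD K t) (a : ℕ) :
    Wp K ^ a * x ∈ WeylD K (t - a) := by
  induction a with
  | zero => simpa using hx
  | succ n ih =>
    have h : Wp K ^ (n + 1) * x = Wp K * (Wp K ^ n * x) := by rw [pow_succ', mul_assoc]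
    rw [h]
    have := weyl_mem_D_pmul K ih
    convert this using 2; push_cast; ring

lemma weyl_prod_mem (a b c d : ℕ) :
    (Wp K ^ a * Wq K ^ b) * (Wp K ^ c * Wq K ^ d)
      ∈ WeylD K ((b : ℤ) + d - (a + c)) := by
  have h0 : (Wp K ^ a * Wq K ^ b) * (Wp K ^ c * Wq K ^ d)
      = Wp K ^ a * ((Wq K ^ b * Wp K ^ c) * Wq K ^ d) := by
    rw [mul_assoc, ← mul_assoc (Wq K ^ b)]
  rw [h0]
  have := weyl_mem_D_ppow_mul K (weyl_mem_D_mul_qpow K (weyl_qpow_ppow_mem K b c) d) a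
  convert this using 2
  push_cast; ring

lemma weyl_D_le_gt0 {t : ℤ} (ht : 0 < t) : WeylD K t ≤ WeylDgt0 K := by
  rw [WeylD]
  apply Submodule.span_le.mpr
  rintro x ⟨i, s, hst, rfl⟩
  exact Submodule.subset_span ⟨i, s, by omega, rfl⟩

lemma weyl_comm_mono_mem (a b c d : ℕ) (hab : a ≤ b) (hcd : c ≤ d) :
    (Wp K ^ a * Wq K ^ b) * (Wp K ^ c * Wq K ^ d)
      - (Wp K ^ c * Wq K ^ d) * (Wp K ^ a * Wq K ^ b) ∈ WeylDgt0 K := by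
  by_cases h : a = b ∧ c = d
  · obtain ⟨rfl, rfl⟩ := h
    rw [weyl_diag_comm, sub_self]
    exact (WeylDgt0 K).zero_mem
  · have ht : (0 : ℤ) < (b : ℤ) + d - (a + c) := by
      push_cast
      omega
    have h1 := weyl_prod_mem K a b c d
    have h2 := weyl_prod_mem K c d a b
    have h2' : (Wp K ^ c * Wq K ^ d) * (Wp K ^ a * Wq K ^ b)
        ∈ WeylD K ((b : ℤ) + d - (a + c)) := by
      convert h2 using 2; push_cast; ring
    exact weyl_D_le_gt0 K ht (Submodule.sub_mem _ h1 h2')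

lemma weyl_comm_mem {z w : Weyl K} (hz : z ∈ WeylDge0 K) (hw : w ∈ WeylDge0 K) :
    z * w - w * z ∈ WeylDgt0 K := by
  induction hz using Submodule.span_induction generalizing w with
  | mem z hzS =>
    induction hw using Submodule.span_induction with
    | mem w hwS =>
      obtain ⟨a, b, hab, rfl⟩ := hzS
      obtain ⟨c, d, hcd, rfl⟩ := hwS
      exact weyl_comm_mono_mem K a b c d hab hcd
    | zero => simp
    | add y y' _ _ hy hy' =>
      have e : z * (y + y') - (y + y') * z = (z * y - y * z) + (z * y' - y' * z) := by
        noncomm_ring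
      rw [e]; exact (WeylDgt0 K).add_mem hy hy'
    | smul a y _ hy =>
      have e : z * (a • y) - (a • y) * z = a • (z * y - y * z) := by
        rw [mul_smul_comm, smul_mul_assoc, smul_sub]
      rw [e]; exact (WeylDgt0 K).smul_mem a hy
  | zero => simp
  | add x y _ _ ihx ihy =>
    have e : (x + y) * w - w * (x + y) = (x * w - w * x) + (y * w - w * y) := by
      noncomm_ring
    rw [e]; exact (WeylDgt0 K).add_mem (ihx hw) (ihy hw)
  | smul a x _ ih =>
    have e : (a • x) * w - w * (a • x) = a • (x * w - w * x) := by
      rw [mul_smul_comm, smul_mul_assoc, smul_sub]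
    rw [e]; exact (WeylDgt0 K).smul_mem a (ih hw)

/-- `[D_{≥0}, D_{≥0}] = D_{>0}`: the `K`-span of all commutators `[z,w]` with
`z, w ∈ D_{≥0}` equals `D_{>0}`. -/
theorem weyl_commutator_span_Dge0 (K : Type) [Field K] [CharZero K] :
    Submodule.span K
        {x : Weyl K | ∃ z w : Weyl K, z ∈ WeylDge0 K ∧ w ∈ WeylDge0 K ∧ x = z * w - w * z} =
      WeylDgt0 K := by
  apply le_antisymm
  · apply Submodule.span_le.mpr
    rintro x ⟨z, w, hz, hw, rfl⟩
    exact weyl_comm_mem K hz hw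
  · rw [WeylDgt0]
    apply Submodule.span_le.mpr
    rintro x ⟨i, s, his, rfl⟩
    set h := Wp K * Wq K with hh
    set x := Wp K ^ i * Wq K ^ s with hx
    have hc : ((s : K) - i) ≠ 0 := by
      rw [sub_ne_zero]
      exact_mod_cast his.ne'
    have key : h * x - x * h = ((s : K) - i) • x := by
      calc h * x - x * h = (h * x + i • x) - (x * h + i • x) := by abel
      _ = (x * h + s • x) - (x * h + i • x) := by rw [weyl_h_monomial]
      _ = s • x - i • x := by abel
      _ = ((s : K) - i) • x := by
          rw [sub_smul ((s : K)) ((i : K)) x, Nat.cast_smul_eq_nsmul, Nat.cast_smul_eq_nsmul]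
    have hxel : x = ((s : K) - i)⁻¹ • (h * x - x * h) := by
      rw [key, smul_smul, inv_mul_cancel₀ hc, one_smul]
    rw [hxel]
    refine Submodule.smul_mem _ _ (Submodule.subset_span ?_)
    refine ⟨h, x, ?_, ?_, rfl⟩
    · exact Submodule.subset_span ⟨1, 1, le_rfl, by rw [pow_one, pow_one]⟩
    · exact Submodule.subset_span ⟨i, s, his.le, rfl⟩
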